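/- Suppose all eight inclusions hold: R(Cᵀ) ⊆ R(Aᵀ), R(B) ⊆ R(A), R((A†B)ᵀ) ⊆ R(Fᵀ), R(CA†) ⊆ R(F), R(C) ⊆ R(D), R(Bᵀ) ⊆ R(Dᵀ), R(BD†) ⊆ R(G), R((D†C)ᵀ) ⊆ R(Gᵀ), where F = D - CA†B and G = A - BD†C. Then F† = D† + D†CG†BD†. -/

import Mathlib

/-!
Write `F = D - C A† B`, `G = A - B D† C` and `X = D† + D† C G† B D†`. Each range inclusion
`R(M) ⊆ R(N)` says that `N N† M = M` (or, for the transposed ones, `M N† N = M`). With these,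
substituting `B D† C = A - G` gives `D D† C - C A† B D† C = C A† G` and
`B D† D - B D† C A† B = G A† B`, from which `F X = D D†` and `X F = D† D`. Both products are
symmetric, so `X` satisfies the four Penrose equations for `F`, and `F† = X` by uniqueness.
-/

open Matrix LinearMap

/-- `X` is the Moore-Penrose inverse of `A`. -/
def IsMoorePenrose {α β : Type*} [Fintype α] [Fintype β] [DecidableEq α] [DecidableEq β]
    (A : Matrix α β ℝ) (X : Matrix β α ℝ) : Prop :=
  A * X * A = A ∧ X * A * X = X ∧ (A * X)ᵀ = A * X ∧ (X * A)ᵀ = X * A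

theorem IsMoorePenrose.unique {α β : Type*} [Fintype α] [Fintype β] [DecidableEq α]
    [DecidableEq β] {F : Matrix α β ℝ} {X Y : Matrix β α ℝ}
    (hX : IsMoorePenrose F X) (hY : IsMoorePenrose F Y) : X = Y := by
  obtain ⟨hX1, hX2, hX3, hX4⟩ := hX
  obtain ⟨hY1, hY2, hY3, hY4⟩ := hY
  have hFX : F * X = F * Y :=
    calc F * X = ((F * Y) * (F * X))ᵀ := by rw [← Matrix.mul_assoc, hY1, hX3]
    _ = F * Y := by rw [transpose_mul, hX3, hY3, ← Matrix.mul_assoc, hX1]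
  have hXF : X * F = Y * F :=
    calc X * F = ((X * F) * (Y * F))ᵀ := by rw [Matrix.mul_assoc, ← Matrix.mul_assoc F, hY1, hX4]
    _ = Y * F := by rw [transpose_mul, hX4, hY4, Matrix.mul_assoc, ← Matrix.mul_assoc F, hX1]
  calc X = X * (F * X) := by rw [← Matrix.mul_assoc, hX2]
  _ = Y * F * Y := by rw [hFX, ← Matrix.mul_assoc, hXF]
  _ = Y := hY2

section RangeInclusion

variable {R : Type*} [CommSemiring R] {α β γ : Type*} [Fintype α] [Fintype γ]
  {N : Matrix α γ R} {X : Matrix γ α R}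

theorem mul_mul_eq_of_range_le [Fintype β] {M : Matrix α β R} (hN : N * X * N = N)
    (h : range M.mulVecLin ≤ range N.mulVecLin) : N * X * M = M := by
  refine ext_iff_mulVec.2 fun v ↦ ?_
  obtain ⟨u, hu⟩ := h ⟨v, rfl⟩
  simp only [mulVecLin_apply] at hu
  rw [← mulVec_mulVec, ← hu, mulVec_mulVec, hN]

theorem mul_mul_eq_of_range_transpose_le [Fintype β] {M : Matrix β γ R} (hN : N * X * N = N)
    (h : range Mᵀ.mulVecLin ≤ range Nᵀ.mulVecLin) : M * X * N = M := by
  have hNt : Nᵀ * Xᵀ * Nᵀ = Nᵀ := by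
    rw [← transpose_mul, ← transpose_mul, ← Matrix.mul_assoc, hN]
  simpa only [transpose_mul, transpose_transpose, Matrix.mul_assoc] using
    congrArg transpose (mul_mul_eq_of_range_le hNt h)

end RangeInclusion

section SchurComplement

variable {R : Type*} [Ring R] {m n p s : Type*} [Fintype m] [Fintype n] [Fintype p] [Fintype s]
  {A : Matrix m n R} {B : Matrix m p R} {C : Matrix s n R} {D : Matrix s p R}
  {Ad : Matrix n m R} {Dd : Matrix p s R} {Gd : Matrix n m R}

theorem schurComplement_mul_eq (hC : D * Dd * C = C) (hCA : C * Ad * A = C)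
    (hG : (A - B * Dd * C) * Gd * (B * Dd) = B * Dd) :
    (D - C * Ad * B) * (Dd + Dd * C * Gd * B * Dd) = D * Dd := by
  have key : D * Dd * C - C * Ad * B * Dd * C = C * Ad * (A - B * Dd * C) := by
    rw [hC, Matrix.mul_sub, hCA]
    simp only [Matrix.mul_assoc]
  calc (D - C * Ad * B) * (Dd + Dd * C * Gd * B * Dd)
      = D * Dd + (D * Dd * C - C * Ad * B * Dd * C) * Gd * (B * Dd) - C * Ad * B * Dd := by
        simp only [Matrix.mul_add, Matrix.sub_mul, Matrix.mul_assoc]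
        abel
    _ = D * Dd + C * Ad * ((A - B * Dd * C) * Gd * (B * Dd)) - C * Ad * B * Dd := by
        rw [key]
        simp only [Matrix.mul_assoc]
    _ = D * Dd := by
        rw [hG]
        simp only [Matrix.mul_assoc, add_sub_cancel_right]

theorem mul_schurComplement_eq (hB : B * Dd * D = B) (hAB : A * Ad * B = B)
    (hG : Dd * C * Gd * (A - B * Dd * C) = Dd * C) :
    (Dd + Dd * C * Gd * B * Dd) * (D - C * Ad * B) = Dd * D := by
  have key : B * Dd * D - B * Dd * C * Ad * B = (A - B * Dd * C) * Ad * B := by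
    rw [hB, Matrix.sub_mul, Matrix.sub_mul, hAB]
  calc (Dd + Dd * C * Gd * B * Dd) * (D - C * Ad * B)
      = Dd * D + Dd * C * Gd * (B * Dd * D - B * Dd * C * Ad * B) - Dd * C * Ad * B := by
        simp only [Matrix.add_mul, Matrix.mul_sub, Matrix.mul_assoc]
        abel
    _ = Dd * D + Dd * C * Gd * (A - B * Dd * C) * Ad * B - Dd * C * Ad * B := by
        rw [key]
        simp only [Matrix.mul_assoc]
    _ = Dd * D := by
        rw [hG, add_sub_cancel_right]

end SchurComplement

theorem stmt8_general
    {m n s p : ℕ}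
    (A : Matrix (Fin m) (Fin n) ℝ) (B : Matrix (Fin m) (Fin p) ℝ)
    (C : Matrix (Fin s) (Fin n) ℝ) (D : Matrix (Fin s) (Fin p) ℝ)
    (Ad : Matrix (Fin n) (Fin m) ℝ) (hA : IsMoorePenrose A Ad)
    (Dd : Matrix (Fin p) (Fin s) ℝ) (hD : IsMoorePenrose D Dd)
    (Fd : Matrix (Fin p) (Fin s) ℝ) (hF : IsMoorePenrose (D - C * Ad * B) Fd)
    (Gd : Matrix (Fin n) (Fin m) ℝ) (hG : IsMoorePenrose (A - B * Dd * C) Gd)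
    (hCt : LinearMap.range (Matrix.mulVecLin (Cᵀ)) ≤ LinearMap.range (Matrix.mulVecLin (Aᵀ)))
    (hB : LinearMap.range (Matrix.mulVecLin (B)) ≤ LinearMap.range (Matrix.mulVecLin (A)))
    (hC : LinearMap.range (Matrix.mulVecLin (C)) ≤ LinearMap.range (Matrix.mulVecLin (D)))
    (hBt : LinearMap.range (Matrix.mulVecLin (Bᵀ)) ≤ LinearMap.range (Matrix.mulVecLin (Dᵀ)))
    (hBD : LinearMap.range (Matrix.mulVecLin (B * Dd)) ≤ LinearMap.range (Matrix.mulVecLin (A - B * Dd * C)))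
    (hDC : LinearMap.range (Matrix.mulVecLin ((Dd * C)ᵀ)) ≤ LinearMap.range (Matrix.mulVecLin ((A - B * Dd * C)ᵀ)))
 :
    Fd = Dd + Dd * C * Gd * B * Dd := by
  obtain ⟨hA1, -, -, -⟩ := hA
  obtain ⟨hD1, hD2, hD3, hD4⟩ := hD
  obtain ⟨hG1, -, -, -⟩ := hG
  have hDDdC : D * Dd * C = C := mul_mul_eq_of_range_le hD1 hC
  have hFX : (D - C * Ad * B) * (Dd + Dd * C * Gd * B * Dd) = D * Dd :=
    schurComplement_mul_eq hDDdC (mul_mul_eq_of_range_transpose_le hA1 hCt)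
      (mul_mul_eq_of_range_le hG1 hBD)
  have hXF : (Dd + Dd * C * Gd * B * Dd) * (D - C * Ad * B) = Dd * D :=
    mul_schurComplement_eq (mul_mul_eq_of_range_transpose_le hD1 hBt)
      (mul_mul_eq_of_range_le hA1 hB) (mul_mul_eq_of_range_transpose_le hG1 hDC)
  refine hF.unique ⟨?_, ?_, by rw [hFX, hD3], by rw [hXF, hD4]⟩
  · rw [hFX, Matrix.mul_sub, hD1, ← Matrix.mul_assoc, ← Matrix.mul_assoc, hDDdC]
  · rw [hXF, Matrix.mul_add, hD2]
    simp only [← Matrix.mul_assoc, hD2]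

theorem stmt8
    {m n s p : ℕ}
    (A : Matrix (Fin m) (Fin n) ℝ) (B : Matrix (Fin m) (Fin p) ℝ)
    (C : Matrix (Fin s) (Fin n) ℝ) (D : Matrix (Fin s) (Fin p) ℝ)
    (Ad : Matrix (Fin n) (Fin m) ℝ) (hA : IsMoorePenrose A Ad)
    (Dd : Matrix (Fin p) (Fin s) ℝ) (hD : IsMoorePenrose D Dd)
    (Fd : Matrix (Fin p) (Fin s) ℝ) (hF : IsMoorePenrose (D - C * Ad * B) Fd)
    (Gd : Matrix (Fin n) (Fin m) ℝ) (hG : IsMoorePenrose (A - B * Dd * C) Gd)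
    (hCt : LinearMap.range (Matrix.mulVecLin (Cᵀ)) ≤ LinearMap.range (Matrix.mulVecLin (Aᵀ)))
    (hB : LinearMap.range (Matrix.mulVecLin (B)) ≤ LinearMap.range (Matrix.mulVecLin (A)))
    (hAB : LinearMap.range (Matrix.mulVecLin ((Ad * B)ᵀ)) ≤ LinearMap.range (Matrix.mulVecLin ((D - C * Ad * B)ᵀ)))
    (hCA : LinearMap.range (Matrix.mulVecLin (C * Ad)) ≤ LinearMap.range (Matrix.mulVecLin (D - C * Ad * B)))
    (hC : LinearMap.range (Matrix.mulVecLin (C)) ≤ LinearMap.range (Matrix.mulVecLin (D)))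
    (hBt : LinearMap.range (Matrix.mulVecLin (Bᵀ)) ≤ LinearMap.range (Matrix.mulVecLin (Dᵀ)))
    (hBD : LinearMap.range (Matrix.mulVecLin (B * Dd)) ≤ LinearMap.range (Matrix.mulVecLin (A - B * Dd * C)))
    (hDC : LinearMap.range (Matrix.mulVecLin ((Dd * C)ᵀ)) ≤ LinearMap.range (Matrix.mulVecLin ((A - B * Dd * C)ᵀ)))
 :
    Fd = Dd + Dd * C * Gd * B * Dd :=
  stmt8_general A B C D Ad hA Dd hD Fd hF Gd hG hCt hB hC hBt hBD hDC
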